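/- There exists a constant C depending only on n such that for all b, c ∈ ℝ^n with b ≠ c and every R ≥ 2, ∫_{B(0,R)} min( |b−c|^n / min(|b−a|^n, |c−a|^n), 2 ) da ≤ C |b−c|^n ( 1 + |log |b−c|| + log R ), where the integrand is interpreted as 2 when a ∈ {b, c} and B(0,R) ⊂ ℝ^n is the Euclidean ball of radius R centered at the origin. -/

import Mathlib

open MeasureTheory Metric Filter Topology

noncomputable section

abbrev Euc (n : ℕ) := EuclideanSpace ℝ (Fin n)

/-- The Jacobian matrix `∇u(x)` of a map `u : ℝⁿ → ℝⁿ`, with entries `∂_j u_i (x)`. -/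
def jacMat (n : ℕ) (u : Euc n → Euc n) (x : Euc n) : Matrix (Fin n) (Fin n) ℝ :=
  Matrix.of fun i j => fderiv ℝ u x (EuclideanSpace.single j 1) i

/-- The vector field `j u := (1/n) (cof ∇u)ᵀ u` (componentwise); note that
`(cof A)ᵀ = adjugate A`. -/
def jvec (n : ℕ) (u : Euc n → Euc n) (x : Euc n) : Fin n → ℝ :=
  fun i => (n : ℝ)⁻¹ * Matrix.mulVec (Matrix.adjugate (jacMat n u x)) (fun j => u x j) i

/-- The pointwise pairing `j u (x) · ∇ψ(x)`. -/
def jPair (n : ℕ) (u : Euc n → Euc n) (ψ : Euc n → ℝ) (x : Euc n) : ℝ :=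
  ∑ i, jvec n u x i * fderiv ℝ ψ x (EuclideanSpace.single i 1)

/-- `ψ ∈ C¹_c(Ω)`. -/
def Cc1 (n : ℕ) (Ω : Set (Euc n)) (ψ : Euc n → ℝ) : Prop :=
  ContDiff ℝ 1 ψ ∧ HasCompactSupport ψ ∧ tsupport ψ ⊆ Ω

/-- The fractional Sobolev seminorm `[u]_{W^{s,p}(Ω)}`. -/
def sobSemi (n : ℕ) (s p : ℝ) (Ω : Set (Euc n)) {F : Type*} [NormedAddCommGroup F]
    (u : Euc n → F) : ℝ :=
  (∫ x in Ω, ∫ y in Ω, ‖u x - u y‖ ^ p / dist x y ^ ((n : ℝ) + s * p)) ^ (1 / p)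

/-- The fractional Sobolev norm `‖u‖_{W^{s,p}(Ω)} = ‖u‖_{L^p(Ω)} + [u]_{W^{s,p}(Ω)}`. -/
def sobNorm (n : ℕ) (s p : ℝ) (Ω : Set (Euc n)) {F : Type*} [NormedAddCommGroup F]
    (u : Euc n → F) : ℝ :=
  (∫ x in Ω, ‖u x‖ ^ p) ^ (1 / p) + sobSemi n s p Ω u

/-- Membership `u ∈ W^{s,p}(Ω; F)`: `u ∈ L^p(Ω)` and the double integral defining
`[u]_{W^{s,p}(Ω)}^p` is finite. -/
def MemWsp (n : ℕ) (s p : ℝ) (Ω : Set (Euc n)) {F : Type*} [NormedAddCommGroup F]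
    (u : Euc n → F) : Prop :=
  AEStronglyMeasurable u (volume.restrict Ω) ∧
  Integrable (fun x => ‖u x‖ ^ p) (volume.restrict Ω) ∧
  Integrable (fun q : Euc n × Euc n => ‖u q.1 - u q.2‖ ^ p / dist q.1 q.2 ^ ((n : ℝ) + s * p))
    ((volume.restrict Ω).prod (volume.restrict Ω))

/-- `Ω` has smooth boundary: it is a sublevel set of a smooth function whose
differential does not vanish on the boundary. -/
def SmoothBoundary (n : ℕ) (Ω : Set (Euc n)) : Prop :=
  ∃ f : Euc n → ℝ, ContDiff ℝ (⊤ : ℕ∞) f ∧ Ω = f ⁻¹' Set.Iio 0 ∧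
    ∀ x ∈ frontier Ω, fderiv ℝ f x ≠ 0

/-- `u^a(x) = (u(x) - a)/|u(x) - a|`. -/
def proj (n : ℕ) (u : Euc n → Euc n) (a : Euc n) : Euc n → Euc n :=
  fun x => ‖u x - a‖⁻¹ • (u x - a)

/-- The set of Hölder quotients of `u` on `Ω`. -/
def holderSet (n : ℕ) (α : ℝ) (Ω : Set (Euc n)) {F : Type*} [NormedAddCommGroup F]
    (u : Euc n → F) : Set ℝ :=
  {r | ∃ x ∈ Ω, ∃ y ∈ Ω, x ≠ y ∧ r = ‖u x - u y‖ / dist x y ^ α}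

/-- The Hölder seminorm `[u]_{C^{0,α}(Ω)}`. -/
def holderSemi (n : ℕ) (α : ℝ) (Ω : Set (Euc n)) {F : Type*} [NormedAddCommGroup F]
    (u : Euc n → F) : ℝ :=
  sSup (holderSet n α Ω u)

/-- The Hölder norm `‖u‖_{C^{0,α}(Ω)} = sup_Ω ‖u‖ + [u]_{C^{0,α}(Ω)}`. -/
def holderNorm (n : ℕ) (α : ℝ) (Ω : Set (Euc n)) {F : Type*} [NormedAddCommGroup F]
    (u : Euc n → F) : ℝ :=
  sSup {r | ∃ x ∈ Ω, r = ‖u x‖} + holderSemi n α Ω u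

/-- the volume `ω_n` of the unit ball of `ℝⁿ`. -/
def ballVol (n : ℕ) : ℝ := (volume (ball (0 : Euc n) 1)).toReal

/-- `⟨Jv, ψ⟩ = J` for `v ∈ W^{(n-1)/n, n}(Ω; ℝⁿ)`: approximating sequences of maps which are
`C¹` up to the boundary exist, and for every such sequence the Jacobian integrals converge
to `J`. -/
def JPairing (n : ℕ) (Ω : Set (Euc n)) (v : Euc n → Euc n) (ψ : Euc n → ℝ) (J : ℝ) : Prop :=
  (∃ vk : ℕ → Euc n → Euc n, (∀ k, ContDiffOn ℝ 1 (vk k) (closure Ω)) ∧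
      Tendsto (fun k => sobNorm n (((n : ℝ) - 1) / n) n Ω (vk k - v)) atTop (𝓝 0) ∧
      Tendsto (fun k => ∫ x in Ω, (jacMat n (vk k) x).det * ψ x) atTop (𝓝 J)) ∧
  (∀ vk : ℕ → Euc n → Euc n, (∀ k, ContDiffOn ℝ 1 (vk k) (closure Ω)) →
      Tendsto (fun k => sobNorm n (((n : ℝ) - 1) / n) n Ω (vk k - v)) atTop (𝓝 0) →
      Tendsto (fun k => ∫ x in Ω, (jacMat n (vk k) x).det * ψ x) atTop (𝓝 J))

/-- The set of values `⟨Jv, ψ⟩` over test functions `ψ ∈ C¹_c(Ω)` with `|ψ| ≤ 1`;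
its supremum is the total variation `|Jv|_{TV}`. -/
def TVset (n : ℕ) (Ω : Set (Euc n)) (v : Euc n → Euc n) : Set ℝ :=
  {r | ∃ ψ : Euc n → ℝ, Cc1 n Ω ψ ∧ (∀ x, |ψ x| ≤ 1) ∧ JPairing n Ω v ψ r}

/-- `⟨Jv, ψ⟩ = -∫_Ω j v · ∇ψ` for (pointwise defined) `v`. -/
def jpairOn (n : ℕ) (Ω : Set (Euc n)) (v : Euc n → Euc n) (ψ : Euc n → ℝ) : ℝ :=
  -∫ x in Ω, jPair n v ψ x

/-- The `W^{-1,1}(Ω)` distance between two functionals on test functions: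
`sup { S ψ - T ψ : ψ ∈ C¹_c(Ω), Lip ψ ≤ 1 }`. -/
def Wm11dist (n : ℕ) (Ω : Set (Euc n)) (S T : (Euc n → ℝ) → ℝ) : ℝ :=
  sSup {r | ∃ ψ : Euc n → ℝ, Cc1 n Ω ψ ∧ LipschitzWith 1 ψ ∧ r = S ψ - T ψ}

lemma contF {n : ℕ} {d : ℝ} (hd : 0 < d) :
    Continuous fun y : Euc n => ((max d ‖y‖) ^ n)⁻¹ := by
  refine ((continuous_const.max continuous_norm).pow n).inv₀ fun y => ?_
  exact (pow_pos (lt_of_lt_of_le hd (le_max_left _ _)) n).ne'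

lemma lemC (n : ℕ) (hn : 0 < n) {d R : ℝ} (hd : 0 < d) (hdR : d ≤ R) :
    ∫ y in ball (0 : Euc n) R, ((max d ‖y‖) ^ n)⁻¹ =
      ballVol n * (1 + n * (Real.log R - Real.log d)) := by
  haveI : Nonempty (Fin n) := Fin.pos_iff_nonempty.mp hn
  have hR : 0 < R := lt_of_lt_of_le hd hdR
  set g : ℝ → ℝ := fun r => ((max d r) ^ n)⁻¹ with hg
  have h1 : ∫ y in ball (0 : Euc n) R, ((max d ‖y‖) ^ n)⁻¹ =
      ∫ y : Euc n, Set.indicator (Set.Iio R) g ‖y‖ := by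
    rw [← integral_indicator measurableSet_ball]
    congr 1
    ext y
    by_cases h : y ∈ ball (0 : Euc n) R
    · rw [Set.indicator_of_mem h, Set.indicator_of_mem (by simpa [mem_ball_zero_iff] using h)]
    · rw [Set.indicator_of_notMem h, Set.indicator_of_notMem
        (by simpa [mem_ball_zero_iff] using h)]
  rw [h1, integral_fun_norm_addHaar volume (Set.indicator (Set.Iio R) g)]
  rw [finrank_euclideanSpace_fin]
  have h2 : ∫ y in Set.Ioi (0:ℝ), y ^ (n-1) • Set.indicator (Set.Iio R) g y =
      ∫ y in Set.Ioo (0:ℝ) R, y ^ (n-1) * g y := by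
    rw [← Set.Ioi_inter_Iio, ← setIntegral_indicator measurableSet_Iio]
    congr 1
    ext y
    by_cases h : y ∈ Set.Iio R
    · rw [Set.indicator_of_mem h, Set.indicator_of_mem h, smul_eq_mul]
    · rw [Set.indicator_of_notMem h, Set.indicator_of_notMem h, smul_zero]
  have hcont : Continuous fun y : ℝ => y ^ (n-1) * g y := by
    refine (continuous_pow _).mul ?_
    exact ((continuous_const.max continuous_id).pow n).inv₀ fun y =>
      (pow_pos (lt_of_lt_of_le hd (le_max_left _ _)) n).ne'
  have h3 : ∫ y in Set.Ioo (0:ℝ) R, y ^ (n-1) * g y = ∫ y in (0:ℝ)..R, y ^ (n-1) * g y := by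
    rw [intervalIntegral.integral_of_le hR.le, ← integral_Ioc_eq_integral_Ioo]
  have h4 : ∫ y in (0:ℝ)..R, y ^ (n-1) * g y =
      (∫ y in (0:ℝ)..d, y ^ (n-1) * g y) + ∫ y in d..R, y ^ (n-1) * g y :=
    (intervalIntegral.integral_add_adjacent_intervals
      (hcont.intervalIntegrable _ _) (hcont.intervalIntegrable _ _)).symm
  have h5 : ∫ y in (0:ℝ)..d, y ^ (n-1) * g y = 1 / n := by
    have : ∫ y in (0:ℝ)..d, y ^ (n-1) * g y = ∫ y in (0:ℝ)..d, y ^ (n-1) * (d ^ n)⁻¹ := by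
      refine intervalIntegral.integral_congr fun y hy => ?_
      rw [Set.uIcc_of_le hd.le] at hy
      simp only [hg, max_eq_left hy.2]
    rw [this, intervalIntegral.integral_mul_const, integral_pow]
    have hne : (d:ℝ) ^ n ≠ 0 := (pow_pos hd n).ne'
    have hnn : ((n:ℝ)) ≠ 0 := Nat.cast_ne_zero.mpr hn.ne'
    have hsub : (n - 1) + 1 = n := Nat.succ_pred_eq_of_pos hn
    rw [hsub]
    push_cast [hsub]
    field_simp
    rw [zero_pow hn.ne', Nat.cast_sub (show 1 ≤ n from hn)]; push_cast; ring
  have h6 : ∫ y in d..R, y ^ (n-1) * g y = Real.log R - Real.log d := by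
    have : ∫ y in d..R, y ^ (n-1) * g y = ∫ y in d..R, y⁻¹ := by
      refine intervalIntegral.integral_congr fun y hy => ?_
      rw [Set.uIcc_of_le hdR] at hy
      have hy0 : 0 < y := lt_of_lt_of_le hd hy.1
      have : max d y = y := max_eq_right hy.1
      rw [hg]
      simp only [this]
      rw [← Nat.succ_pred_eq_of_pos hn, pow_succ]
      field_simp
      simp
    rw [this, integral_inv_of_pos hd hR, Real.log_div hR.ne' hd.ne']
  rw [h2, h3, h4, h5, h6, nsmul_eq_mul, smul_eq_mul]
  have hnn : ((n:ℝ)) ≠ 0 := Nat.cast_ne_zero.mpr hn.ne'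
  rw [ballVol, mul_left_comm]
  congr 1
  field_simp
lemma intF {n : ℕ} {d : ℝ} (hd : 0 < d) (x : Euc n) (R : ℝ) :
    IntegrableOn (fun y : Euc n => ((max d ‖y‖) ^ n)⁻¹) (ball x R) :=
  ((contF hd).locallyIntegrable.integrableOn_isCompact
    (isCompact_closedBall x R)).mono_set ball_subset_closedBall

lemma lemA {n : ℕ} (d R : ℝ) (b : Euc n) :
    ∫ a in ball (0 : Euc n) R, ((max d ‖a - b‖) ^ n)⁻¹ =
      ∫ y in ball (-b : Euc n) R, ((max d ‖y‖) ^ n)⁻¹ := by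
  have key : ∀ a : Euc n, Set.indicator (ball (0:Euc n) R)
        (fun a => ((max d ‖a - b‖) ^ n)⁻¹) a =
      Set.indicator (ball (-b : Euc n) R) (fun y => ((max d ‖y‖) ^ n)⁻¹) (a - b) := by
    intro a
    have hmem : a - b ∈ ball (-b : Euc n) R ↔ a ∈ ball (0 : Euc n) R := by
      simp only [mem_ball_iff_norm, sub_neg_eq_add, sub_add_cancel, sub_zero]
    by_cases h : a ∈ ball (0 : Euc n) R
    · rw [Set.indicator_of_mem h, Set.indicator_of_mem (hmem.mpr h)]
    · rw [Set.indicator_of_notMem h, Set.indicator_of_notMem (fun hc => h (hmem.mp hc))]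
  rw [← integral_indicator measurableSet_ball, ← integral_indicator measurableSet_ball]
  calc ∫ a, Set.indicator (ball (0:Euc n) R) (fun a => ((max d ‖a - b‖) ^ n)⁻¹) a
      = ∫ a, Set.indicator (ball (-b:Euc n) R) (fun y => ((max d ‖y‖) ^ n)⁻¹) (a - b) :=
        integral_congr_ae (Filter.Eventually.of_forall key)
    _ = _ := integral_sub_right_eq_self _ b

lemma lemB {n : ℕ} {d : ℝ} (R : ℝ) (hd : 0 < d) (b : Euc n) :
    ∫ y in ball (b : Euc n) R, ((max d ‖y‖) ^ n)⁻¹ ≤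
      ∫ y in ball (0 : Euc n) R, ((max d ‖y‖) ^ n)⁻¹ := by
  set F : Euc n → ℝ := fun y => ((max d ‖y‖) ^ n)⁻¹ with hF
  set B := ball (0 : Euc n) R with hB
  set E := ball (b : Euc n) R with hE
  set K : ℝ := ((max d R) ^ n)⁻¹ with hK
  have hmax : 0 < max d R := lt_of_lt_of_le hd (le_max_left _ _)
  have hEB : volume (E \ B) = volume (B \ E) := by
    have h1 : volume (E ∩ B) + volume (E \ B) = volume E :=
      measure_inter_add_diff E measurableSet_ball
    have h2 : volume (B ∩ E) + volume (B \ E) = volume B :=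
      measure_inter_add_diff B measurableSet_ball
    have h3 : volume E = volume B := Measure.addHaar_ball_center volume b R
    have h4 : volume (E ∩ B) ≠ ⊤ :=
      (lt_of_le_of_lt (measure_mono Set.inter_subset_left) measure_ball_lt_top).ne
    rw [Set.inter_comm] at h2
    rw [← h3, ← h1] at h2
    exact (ENNReal.add_right_inj h4).mp h2.symm
  have hFK_out : ∀ y ∈ E \ B, F y ≤ K := by
    intro y hy
    have : R ≤ ‖y‖ := by
      have := hy.2
      rw [hB, mem_ball_zero_iff, not_lt] at this
      exact this
    exact inv_anti₀ (pow_pos hmax n)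
      (pow_le_pow_left₀ hmax.le (max_le_max le_rfl this) n)
  have hFK_in : ∀ y ∈ B \ E, K ≤ F y := by
    intro y hy
    have : ‖y‖ ≤ R := by
      have := hy.1
      rw [hB, mem_ball_zero_iff] at this
      exact this.le
    exact inv_anti₀ (pow_pos (lt_of_lt_of_le hd (le_max_left _ _)) n)
      (pow_le_pow_left₀ (le_trans hd.le (le_max_left _ _)) (max_le_max le_rfl this) n)
  have hIE : IntegrableOn F E := intF hd b R
  have hIB : IntegrableOn F B := intF hd 0 R
  have split1 : (∫ y in E ∩ B, F y) + ∫ y in E \ B, F y = ∫ y in E, F y :=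
    integral_inter_add_diff measurableSet_ball hIE
  have split2 : (∫ y in B ∩ E, F y) + ∫ y in B \ E, F y = ∫ y in B, F y :=
    integral_inter_add_diff measurableSet_ball hIB
  have hfin1 : volume (E \ B) ≠ ⊤ :=
    (lt_of_le_of_lt (measure_mono Set.diff_subset) measure_ball_lt_top).ne
  have hfin2 : volume (B \ E) ≠ ⊤ :=
    (lt_of_le_of_lt (measure_mono Set.diff_subset) measure_ball_lt_top).ne
  have b1 : ∫ y in E \ B, F y ≤ (volume (E \ B)).toReal * K := by
    calc ∫ y in E \ B, F y ≤ ∫ _ in E \ B, K :=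
          setIntegral_mono_on (hIE.mono_set Set.diff_subset)
            (integrableOn_const hfin1)
            (measurableSet_ball.diff measurableSet_ball) hFK_out
      _ = (volume (E \ B)).toReal * K := by rw [setIntegral_const, smul_eq_mul, measureReal_def]
  have b2 : (volume (B \ E)).toReal * K ≤ ∫ y in B \ E, F y := by
    calc (volume (B \ E)).toReal * K = ∫ _ in B \ E, K := by rw [setIntegral_const, smul_eq_mul, measureReal_def]
      _ ≤ ∫ y in B \ E, F y :=
          setIntegral_mono_on (integrableOn_const hfin2)
            (hIB.mono_set Set.diff_subset)
            (measurableSet_ball.diff measurableSet_ball) hFK_in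
  have hinter : (∫ y in E ∩ B, F y) = ∫ y in B ∩ E, F y := by rw [Set.inter_comm]
  calc ∫ y in E, F y = (∫ y in E ∩ B, F y) + ∫ y in E \ B, F y := split1.symm
    _ ≤ (∫ y in E ∩ B, F y) + (volume (E \ B)).toReal * K := by linarith
    _ = (∫ y in B ∩ E, F y) + (volume (B \ E)).toReal * K := by rw [hinter, hEB]
    _ ≤ (∫ y in B ∩ E, F y) + ∫ y in B \ E, F y := by linarith
    _ = ∫ y in B, F y := split2
lemma lemD (n : ℕ) (hn : 0 < n) {d R : ℝ} (hd : 0 < d) (hR : 1 ≤ R) (b : Euc n) :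
    ∫ a in ball (0 : Euc n) R, ((max d ‖a - b‖) ^ n)⁻¹ ≤
      ballVol n * (1 + n * (Real.log R + |Real.log d|)) := by
  haveI : Nonempty (Fin n) := Fin.pos_iff_nonempty.mp hn
  rw [lemA d R b]
  refine le_trans (lemB R hd (-b)) ?_
  have hR0 : 0 < R := lt_of_lt_of_le one_pos hR
  have hlogR : 0 ≤ Real.log R := Real.log_nonneg hR
  have hω : 0 ≤ ballVol n := ENNReal.toReal_nonneg
  have habs : 0 ≤ |Real.log d| := abs_nonneg _
  have hncast : 0 ≤ (n : ℝ) := Nat.cast_nonneg n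
  rcases le_total d R with h | h
  · rw [lemC n hn hd h]
    have h1 : Real.log R - Real.log d ≤ Real.log R + |Real.log d| := by
      have := neg_le_abs (Real.log d); linarith
    have h2 : (n:ℝ) * (Real.log R - Real.log d) ≤ (n:ℝ) * (Real.log R + |Real.log d|) :=
      mul_le_mul_of_nonneg_left h1 hncast
    exact mul_le_mul_of_nonneg_left (by linarith) hω
  · have hb : ∀ y ∈ ball (0:Euc n) R, ((max d ‖y‖)^n)⁻¹ ≤ (d^n)⁻¹ := by
      intro y _
      exact inv_anti₀ (pow_pos hd n) (pow_le_pow_left₀ hd.le (le_max_left _ _) n)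
    have hvol : (volume (ball (0:Euc n) R)).toReal = R ^ n * ballVol n := by
      rw [Measure.addHaar_ball _ _ hR0.le, finrank_euclideanSpace_fin, ENNReal.toReal_mul,
        ENNReal.toReal_ofReal (pow_nonneg hR0.le n), ballVol]
    have step : ∫ y in ball (0:Euc n) R, ((max d ‖y‖)^n)⁻¹ ≤
        (volume (ball (0:Euc n) R)).toReal * (d^n)⁻¹ := by
      calc ∫ y in ball (0:Euc n) R, ((max d ‖y‖)^n)⁻¹ ≤ ∫ _ in ball (0:Euc n) R, (d^n)⁻¹ :=
            setIntegral_mono_on (intF hd 0 R)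
              (integrableOn_const measure_ball_lt_top.ne)
              measurableSet_ball hb
        _ = _ := by rw [setIntegral_const, smul_eq_mul, measureReal_def]
    have hRd : R ^ n * (d^n)⁻¹ ≤ 1 := by
      rw [mul_inv_le_iff₀ (pow_pos hd n), one_mul]
      exact pow_le_pow_left₀ hR0.le h n
    have : (volume (ball (0:Euc n) R)).toReal * (d^n)⁻¹ ≤ ballVol n := by
      rw [hvol]
      calc R ^ n * ballVol n * (d^n)⁻¹ = ballVol n * (R^n * (d^n)⁻¹) := by ring
        _ ≤ ballVol n * 1 := by
            exact mul_le_mul_of_nonneg_left hRd hω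
        _ = ballVol n := mul_one _
    have hfin : ballVol n ≤ ballVol n * (1 + n * (Real.log R + |Real.log d|)) :=
      le_mul_of_one_le_right hω
        (by nlinarith [mul_nonneg hncast (add_nonneg hlogR habs)])
    linarith
lemma intF' {n : ℕ} {d : ℝ} (hd : 0 < d) (b x : Euc n) (R : ℝ) :
    IntegrableOn (fun a : Euc n => ((max d ‖a - b‖) ^ n)⁻¹) (ball x R) := by
  have hcont : Continuous fun a : Euc n => ((max d ‖a - b‖) ^ n)⁻¹ :=
    ((continuous_const.max ((continuous_id.sub continuous_const).norm)).pow n).inv₀ fun y =>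
      (pow_pos (lt_of_lt_of_le hd (le_max_left _ _)) n).ne'
  exact (hcont.locallyIntegrable.integrableOn_isCompact
    (isCompact_closedBall x R)).mono_set ball_subset_closedBall

open Classical in
/-- The logarithmic integral estimate. -/
theorem log_integral_estimate (n : ℕ) :
    ∃ C : ℝ, 0 < C ∧ ∀ (b c : Euc n), b ≠ c → ∀ R : ℝ, 2 ≤ R →
      (∫ a in ball (0 : Euc n) R,
          if a = b ∨ a = c then (2 : ℝ)
          else min (‖b - c‖ ^ n / min (‖b - a‖ ^ n) (‖c - a‖ ^ n)) 2) ≤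
        C * ‖b - c‖ ^ n * (1 + |Real.log ‖b - c‖| + Real.log R) := by
  rcases Nat.eq_zero_or_pos n with hn | hn
  · subst hn
    exact ⟨1, one_pos, fun b c hbc => absurd (PiLp.ext fun i => Fin.elim0 i) hbc⟩
  have hω : 0 < ballVol n := by
    rw [ballVol]
    exact ENNReal.toReal_pos (measure_ball_pos volume 0 one_pos).ne' measure_ball_lt_top.ne
  refine ⟨4 * ballVol n * (n + 1), by positivity, fun b c hbc R hR => ?_⟩
  set d : ℝ := ‖b - c‖ with hdd
  have hd : 0 < d := norm_pos_iff.mpr (sub_ne_zero_of_ne hbc)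
  have hR1 : (1:ℝ) ≤ R := le_trans one_le_two hR
  have hR0 : (0:ℝ) < R := lt_of_lt_of_le one_pos hR1
  have hlogR : 0 ≤ Real.log R := Real.log_nonneg hR1
  have habs : 0 ≤ |Real.log d| := abs_nonneg _
  have hncast : 0 ≤ (n:ℝ) := Nat.cast_nonneg n
  set G : Euc n → ℝ := fun a =>
    2 * d ^ n * ((max d ‖a - b‖) ^ n)⁻¹ + 2 * d ^ n * ((max d ‖a - c‖) ^ n)⁻¹ with hG
  -- helper facts
  have hterm_nonneg : ∀ x : Euc n, ∀ e : Euc n,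
      (0:ℝ) ≤ 2 * d ^ n * ((max d ‖x - e‖) ^ n)⁻¹ := fun x e => by positivity
  have hterm_eq : ∀ x : Euc n, ∀ e : Euc n, ‖x - e‖ ≤ d →
      2 * d ^ n * ((max d ‖x - e‖) ^ n)⁻¹ = 2 := by
    intro x e h
    rw [max_eq_left h, mul_inv_cancel_right₀ (pow_pos hd n).ne']
  have hterm_ge : ∀ x : Euc n, ∀ e : Euc n, d ≤ ‖x - e‖ →
      d ^ n * (‖x - e‖ ^ n)⁻¹ ≤ 2 * d ^ n * ((max d ‖x - e‖) ^ n)⁻¹ := by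
    intro x e h
    rw [max_eq_right h]
    nlinarith [mul_nonneg (pow_nonneg hd.le n) (inv_nonneg.mpr (pow_nonneg (norm_nonneg (x-e)) n))]
  -- pointwise bound
  have key : ∀ a : Euc n,
      (if a = b ∨ a = c then (2:ℝ)
        else min (‖b - c‖ ^ n / min (‖b - a‖ ^ n) (‖c - a‖ ^ n)) 2) ≤ G a := by
    intro a
    by_cases hab : a = b ∨ a = c
    · rw [if_pos hab]
      rcases hab with h | h
      · have e1 : 2 * d ^ n * ((max d ‖a - b‖) ^ n)⁻¹ = 2 :=
          hterm_eq a b (by rw [h, sub_self, norm_zero]; exact hd.le)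
        have := hterm_nonneg a c
        rw [hG]; dsimp only; linarith
      · have e1 : 2 * d ^ n * ((max d ‖a - c‖) ^ n)⁻¹ = 2 :=
          hterm_eq a c (by rw [h, sub_self, norm_zero]; exact hd.le)
        have := hterm_nonneg a b
        rw [hG]; dsimp only; linarith
    · rw [if_neg hab]
      push_neg at hab
      have hxb : ‖b - a‖ = ‖a - b‖ := norm_sub_rev b a
      have hxc : ‖c - a‖ = ‖a - c‖ := norm_sub_rev c a
      rcases le_total ‖a - b‖ d with h1 | h1
      · have e1 : 2 * d ^ n * ((max d ‖a - b‖) ^ n)⁻¹ = 2 := hterm_eq a b h1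
        have := hterm_nonneg a c
        have : min (‖b - c‖ ^ n / min (‖b - a‖ ^ n) (‖c - a‖ ^ n)) 2 ≤ 2 := min_le_right _ _
        rw [hG]; dsimp only; linarith [hterm_nonneg a c]
      · rcases le_total ‖a - c‖ d with h2 | h2
        · have e1 : 2 * d ^ n * ((max d ‖a - c‖) ^ n)⁻¹ = 2 := hterm_eq a c h2
          have : min (‖b - c‖ ^ n / min (‖b - a‖ ^ n) (‖c - a‖ ^ n)) 2 ≤ 2 := min_le_right _ _
          rw [hG]; dsimp only; linarith [hterm_nonneg a b]
        · -- both distances ≥ d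
          have hb0 : (0:ℝ) < ‖a - b‖ := lt_of_lt_of_le hd h1
          have hc0 : (0:ℝ) < ‖a - c‖ := lt_of_lt_of_le hd h2
          have hmin : min (‖b - c‖ ^ n / min (‖b - a‖ ^ n) (‖c - a‖ ^ n)) 2 ≤
              d ^ n / min (‖a - b‖ ^ n) (‖a - c‖ ^ n) := by
            rw [hxb, hxc] at *
            exact le_trans (min_le_left _ _) (le_of_eq (by rw [hdd]))
          rcases le_total ‖a - b‖ ‖a - c‖ with h3 | h3
          · have hmm : min (‖a - b‖ ^ n) (‖a - c‖ ^ n) = ‖a - b‖ ^ n :=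
              min_eq_left (pow_le_pow_left₀ (norm_nonneg _) h3 n)
            have : d ^ n / min (‖a - b‖ ^ n) (‖a - c‖ ^ n) = d ^ n * (‖a - b‖ ^ n)⁻¹ := by
              rw [hmm, div_eq_mul_inv]
            rw [hG]; dsimp only
            linarith [hterm_ge a b h1, hterm_nonneg a c, hmin, this.symm.le,
              this ▸ hmin]
          · have hmm : min (‖a - b‖ ^ n) (‖a - c‖ ^ n) = ‖a - c‖ ^ n :=
              min_eq_right (pow_le_pow_left₀ (norm_nonneg _) h3 n)
            have : d ^ n / min (‖a - b‖ ^ n) (‖a - c‖ ^ n) = d ^ n * (‖a - c‖ ^ n)⁻¹ := by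
              rw [hmm, div_eq_mul_inv]
            rw [hG]; dsimp only
            linarith [hterm_ge a c h2, hterm_nonneg a b, this ▸ hmin]
  -- integrability of G
  have hint1 : IntegrableOn (fun a : Euc n => ((max d ‖a - b‖) ^ n)⁻¹) (ball 0 R) :=
    intF' hd b 0 R
  have hint2 : IntegrableOn (fun a : Euc n => ((max d ‖a - c‖) ^ n)⁻¹) (ball 0 R) :=
    intF' hd c 0 R
  have hintG : IntegrableOn G (ball (0:Euc n) R) :=
    (hint1.const_mul _).add (hint2.const_mul _)
  -- nonnegativity of integrand
  have hf_nonneg : ∀ a : Euc n, 0 ≤ (if a = b ∨ a = c then (2:ℝ)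
      else min (‖b - c‖ ^ n / min (‖b - a‖ ^ n) (‖c - a‖ ^ n)) 2) := by
    intro a
    by_cases hab : a = b ∨ a = c
    · rw [if_pos hab]; norm_num
    · rw [if_neg hab]
      refine le_min (div_nonneg (pow_nonneg (norm_nonneg _) n)
        (le_min (pow_nonneg (norm_nonneg _) n) (pow_nonneg (norm_nonneg _) n))) (by norm_num)
  -- main chain
  have step1 : (∫ a in ball (0 : Euc n) R,
      if a = b ∨ a = c then (2:ℝ)
      else min (‖b - c‖ ^ n / min (‖b - a‖ ^ n) (‖c - a‖ ^ n)) 2) ≤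
      ∫ a in ball (0 : Euc n) R, G a :=
    integral_mono_of_nonneg (Filter.Eventually.of_forall hf_nonneg) hintG
      (Filter.Eventually.of_forall key)
  have step2 : ∫ a in ball (0 : Euc n) R, G a =
      2 * d ^ n * (∫ a in ball (0 : Euc n) R, ((max d ‖a - b‖) ^ n)⁻¹) +
      2 * d ^ n * (∫ a in ball (0 : Euc n) R, ((max d ‖a - c‖) ^ n)⁻¹) := by
    rw [hG, integral_add (hint1.const_mul _) (hint2.const_mul _),
      integral_const_mul, integral_const_mul]
  have step3 : 2 * d ^ n * (∫ a in ball (0 : Euc n) R, ((max d ‖a - b‖) ^ n)⁻¹) +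
      2 * d ^ n * (∫ a in ball (0 : Euc n) R, ((max d ‖a - c‖) ^ n)⁻¹) ≤
      4 * d ^ n * (ballVol n * (1 + n * (Real.log R + |Real.log d|))) := by
    have l1 := lemD n hn hd hR1 b
    have l2 := lemD n hn hd hR1 c
    have h2d : (0:ℝ) ≤ 2 * d ^ n := by positivity
    nlinarith [mul_le_mul_of_nonneg_left l1 h2d, mul_le_mul_of_nonneg_left l2 h2d]
  have inner : 1 + (n:ℝ) * (Real.log R + |Real.log d|) ≤
      ((n:ℝ) + 1) * (1 + |Real.log d| + Real.log R) := by nlinarith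
  have step4 : 4 * d ^ n * (ballVol n * (1 + n * (Real.log R + |Real.log d|))) ≤
      4 * ballVol n * (n + 1) * d ^ n * (1 + |Real.log d| + Real.log R) := by
    have h0 : (0:ℝ) ≤ 4 * d ^ n * ballVol n := by positivity
    calc 4 * d ^ n * (ballVol n * (1 + n * (Real.log R + |Real.log d|)))
        = 4 * d ^ n * ballVol n * (1 + n * (Real.log R + |Real.log d|)) := by ring
      _ ≤ 4 * d ^ n * ballVol n * (((n:ℝ) + 1) * (1 + |Real.log d| + Real.log R)) :=
          mul_le_mul_of_nonneg_left inner h0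
      _ = 4 * ballVol n * (n + 1) * d ^ n * (1 + |Real.log d| + Real.log R) := by ring
  calc (∫ a in ball (0 : Euc n) R,
      if a = b ∨ a = c then (2:ℝ)
      else min (‖b - c‖ ^ n / min (‖b - a‖ ^ n) (‖c - a‖ ^ n)) 2) ≤
      ∫ a in ball (0 : Euc n) R, G a := step1
    _ = _ := step2
    _ ≤ 4 * d ^ n * (ballVol n * (1 + n * (Real.log R + |Real.log d|))) := step3
    _ ≤ 4 * ballVol n * (n + 1) * d ^ n * (1 + |Real.log d| + Real.log R) := step4

end
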